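/- Every n-qubit Pauli assignment (for any n) of the doily hypergram S_d = ({1,…,15}, H_d, G_d) has contextuality degree 3. -/

import Mathlib

open scoped Classical
open Matrix

noncomputable section

/-- The space of `n`-qubit operators, realized as matrices indexed by
`Fin n → Fin 2` (the `n`-fold tensor-product index). -/
abbrev QMat (n : ℕ) := Matrix (Fin n → Fin 2) (Fin n → Fin 2) ℂ

/-- The four Pauli matrices `I, X, Y, Z`. -/
def pauliMat : Fin 4 → Matrix (Fin 2) (Fin 2) ℂ
  | ⟨0, _⟩ => 1
  | ⟨1, _⟩ => !![0, 1; 1, 0]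
  | ⟨2, _⟩ => !![0, -Complex.I; Complex.I, 0]
  | ⟨3, _⟩ => !![1, 0; 0, -1]

/-- The `n`-fold Kronecker (tensor) product `G₁ ⊗ ⋯ ⊗ Gₙ` of the Pauli matrices
selected by `g : Fin n → Fin 4`, as a matrix indexed by `Fin n → Fin 2`. -/
def nPauli {n : ℕ} (g : Fin n → Fin 4) : QMat n :=
  Matrix.of fun r c => ∏ k, pauliMat (g k) (r k) (c k)

/-- `M` is an `n`-qubit Pauli observable. -/
def IsPauliObs (n : ℕ) (M : QMat n) : Prop := ∃ g : Fin n → Fin 4, M = nPauli g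

/-- `I^⊗n`, the `n`-fold tensor product of the identity. -/
def idN (n : ℕ) : QMat n := nPauli (fun _ => ⟨0, by omega⟩)

/-- Product of `f` over a finite set of naturals, taken in increasing order
(well-defined without commutativity; agrees with the unordered product when the
factors pairwise commute). -/
def natFinsetProd {M : Type*} [Monoid M] (s : Finset ℕ) (f : ℕ → M) : M :=
  ((s.sort (· ≤ ·)).map f).prod

/-- `(V,H,G)` is a hypergram: `V` a nonempty finite vertex set, `H` a set of
nonempty hyperedges covering `V`, `G` a set of 2-element edges on `V` forming a
simple reduced graph, no edge of `G` being contained in a hyperedge of `H`. -/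
def IsHypergram (V : Finset ℕ) (H G : Finset (Finset ℕ)) : Prop :=
  V.Nonempty ∧
  (∀ h ∈ H, h ⊆ V ∧ h.Nonempty) ∧
  (∀ v ∈ V, ∃ h ∈ H, v ∈ h) ∧
  (∀ e ∈ G, e ⊆ V ∧ e.card = 2) ∧
  (∀ v ∈ V, ∃ e ∈ G, v ∈ e) ∧
  (∀ v ∈ V, ∀ w ∈ V,
    (∀ u ∈ V, (({v, u} : Finset ℕ) ∈ G ↔ ({w, u} : Finset ℕ) ∈ G)) → v = w) ∧
  (∀ e ∈ G, ∀ h ∈ H, ¬ e ⊆ h)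

/-- `α` is an `n`-qubit Pauli assignment of the hypergram `(V,H,G)`. -/
def IsPauliAssignment (V : Finset ℕ) (H G : Finset (Finset ℕ)) (n : ℕ)
    (α : ℕ → QMat n) : Prop :=
  (∀ v ∈ V, IsPauliObs n (α v)) ∧
  (∀ v ∈ V, α v ≠ idN n) ∧
  (∀ v₁ ∈ V, ∀ v₂ ∈ V, α v₁ = α v₂ → v₁ = v₂) ∧
  (∀ v₁ ∈ V, ∀ v₂ ∈ V, v₁ ≠ v₂ →
    (α v₁ * α v₂ = -(α v₂ * α v₁) ↔ ({v₁, v₂} : Finset ℕ) ∈ G)) ∧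
  (∀ h ∈ H, natFinsetProd h α = idN n ∨ natFinsetProd h α = -(idN n))

/-- The sign `sgn_α(h) ∈ {−1,1}` of a hyperedge `h`: `∏_{v∈h} α(v) = sgn_α(h)·I^⊗n`. -/
def quantumSgn {n : ℕ} (α : ℕ → QMat n) (h : Finset ℕ) : ℤ :=
  if natFinsetProd h α = idN n then 1 else -1

/-- The sign `sgn_a(h) = ∏_{v∈h} a(v)` of a hyperedge for a classical assignment. -/
def classicalSgn (a : ℕ → ℤ) (h : Finset ℕ) : ℤ := ∏ v ∈ h, a v

/-- The contextuality degree of a Pauli assignment: the minimum over classical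
assignments `a : V → {−1,1}` of the number of hyperedges whose signs differ. -/
def contextualityDegree {n : ℕ} (H : Finset (Finset ℕ)) (α : ℕ → QMat n) : ℕ :=
  sInf { d : ℕ | ∃ a : ℕ → ℤ, (∀ v, a v = 1 ∨ a v = -1) ∧
    d = (H.filter (fun h => quantumSgn α h ≠ classicalSgn a h)).card }

/-- The context (incidence) matrix of a hypergram over 𝔽₂. -/
def contextMatrix (V : Finset ℕ) (H : Finset (Finset ℕ)) :
    Matrix {h // h ∈ H} {v // v ∈ V} (ZMod 2) :=
  Matrix.of fun h v => if v.1 ∈ h.1 then 1 else 0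

/-- The anticommutation (adjacency) matrix of a hypergram over 𝔽₂. -/
def anticommMatrix (V : Finset ℕ) (G : Finset (Finset ℕ)) :
    Matrix {v // v ∈ V} {v // v ∈ V} (ZMod 2) :=
  Matrix.of fun i j => if ({i.1, j.1} : Finset ℕ) ∈ G then 1 else 0

/-- The standard symplectic form on `𝔽₂^{2n}`:
`⟨x,y⟩ = Σ_{k=1}^{n} (x_{2k−1} y_{2k} + x_{2k} y_{2k−1})`. -/
def sympForm (n : ℕ) (x y : Fin (2 * n) → ZMod 2) : ZMod 2 :=
  ∑ k : Fin n,
    (x ⟨2 * k.1, by have := k.2; omega⟩ * y ⟨2 * k.1 + 1, by have := k.2; omega⟩ +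
     x ⟨2 * k.1 + 1, by have := k.2; omega⟩ * y ⟨2 * k.1, by have := k.2; omega⟩)

/-- The single-qubit encoding `ψ(I)=(0,0), ψ(X)=(0,1), ψ(Y)=(1,1), ψ(Z)=(1,0)`. -/
def psi4 : Fin 4 → (ZMod 2) × (ZMod 2)
  | ⟨0, _⟩ => (0, 0)
  | ⟨1, _⟩ => (0, 1)
  | ⟨2, _⟩ => (1, 1)
  | ⟨3, _⟩ => (1, 0)

/-- The encoding `ψ` of an `n`-qubit Pauli observable (given by its tensor
factors `g`) as a vector of `𝔽₂^{2n}`, concatenating the per-factor encodings. -/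
def psiVec {n : ℕ} (g : Fin n → Fin 4) : Fin (2 * n) → ZMod 2 := fun idx =>
  if idx.1 % 2 = 0 then (psi4 (g ⟨idx.1 / 2, by have := idx.2; omega⟩)).1
  else (psi4 (g ⟨idx.1 / 2, by have := idx.2; omega⟩)).2

/-- All pairs of elements of `S` commute. -/
def PairComm {n : ℕ} (S : Finset (QMat n)) : Prop := ∀ a ∈ S, ∀ b ∈ S, a * b = b * a

/-- The (well-defined) product of a finite set of pairwise commuting matrices. -/
def commProd {n : ℕ} (S : Finset (QMat n)) (h : PairComm S) : QMat n :=
  S.noncommProd id (fun a ha b hb _ => h a ha b hb)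

/-- Pairwise commutation is inherited by subsets. -/
def pairCommOfSubset {n : ℕ} {S T : Finset (QMat n)} (hST : S ⊆ T) (h : PairComm T) :
    PairComm S := fun a ha b hb => h a (hST ha) b (hST hb)

/-- `Q` (pairwise commuting) is independent: no nonempty subset has product `±I^⊗n`. -/
def IsIndep {n : ℕ} (Q : Finset (QMat n)) (hQ : PairComm Q) : Prop :=
  ∀ S : Finset (QMat n), ∀ (hS : S ⊆ Q), S.Nonempty →
    commProd S (pairCommOfSubset hS hQ) ≠ idN n ∧
    commProd S (pairCommOfSubset hS hQ) ≠ -(idN n)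

/-- The vertex set `{1, …, 15}`. -/
def V15 : Finset ℕ := Finset.Icc 1 15

/-- The 15 lines of the doily. -/
def doilyLines : Finset (Finset ℕ) :=
  { {1,2,3}, {1,8,9}, {1,10,11}, {2,4,6}, {2,5,7}, {3,12,15}, {3,13,14},
    {4,8,12}, {4,10,14}, {5,8,13}, {5,10,15}, {6,9,15}, {6,11,13},
    {7,9,14}, {7,11,12} }

/-- The 10 lines of the two-spread `H_{2s}`. -/
def twoSpreadLines : Finset (Finset ℕ) :=
  { {1,2,3}, {1,10,11}, {2,4,6}, {3,13,14}, {4,8,12}, {5,8,13}, {5,10,15},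
    {6,9,15}, {7,9,14}, {7,11,12} }

/-- The anticommutation graph `G_d = G_{2s}`: pairs of distinct vertices not on a
common doily line. -/
def doilyG : Finset (Finset ℕ) :=
  (V15.powersetCard 2).filter (fun e => ∀ h ∈ doilyLines, ¬ e ⊆ h)

open Finset

/-!
The doily has six spreads (five pairwise disjoint lines through all fifteen points), and the ten
lines off a spread cover every point exactly twice. For a classical assignment the signs of these
ten lines therefore multiply to `1`. For a Pauli assignment they multiply to `-1`: the product of
the ten line products is a word in which every observable occurs twice, and cancelling the pairs
with `A * A = 1` and the commutation relations dictated by collinearity leaves `-1`. So every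
classical assignment is wrong on an odd number of lines off each spread; as every line lies on a
spread and any two lines lie off a common spread, it is wrong on at least three lines.
Conversely, the quantum signs flipped on the three lines `{3,12,15}, {6,11,13}, {7,9,14}` still
satisfy the six parity relations, and every sign pattern satisfying them is classical.
-/

lemma pauliMat_mul_self (a : Fin 4) : pauliMat a * pauliMat a = 1 := by
  fin_cases a <;> ext i j <;> fin_cases i <;> fin_cases j <;>
    simp [pauliMat, Matrix.mul_apply, Fin.sum_univ_two, Matrix.one_apply]

lemma pauliMat_mul_comm (a b : Fin 4) :
    pauliMat a * pauliMat b =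
      (if a = 0 ∨ b = 0 ∨ a = b then 1 else -1 : ℂ) • (pauliMat b * pauliMat a) := by
  fin_cases a <;> fin_cases b <;> ext i j <;> fin_cases i <;> fin_cases j <;>
    simp [pauliMat, Matrix.mul_apply, Fin.sum_univ_two]

lemma idN_eq_one (n : ℕ) : idN n = 1 := by
  ext r c
  simp [idN, nPauli, pauliMat, Matrix.one_apply, Fintype.prod_boole, funext_iff]

lemma nPauli_mul_nPauli {n : ℕ} (g g' : Fin n → Fin 4) :
    nPauli g * nPauli g' =
      Matrix.of fun r c => ∏ k, (pauliMat (g k) * pauliMat (g' k)) (r k) (c k) := by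
  ext r c
  simp only [Matrix.mul_apply, nPauli, Matrix.of_apply]
  rw [Fintype.prod_sum]
  simp [Finset.prod_mul_distrib]

lemma nPauli_mul_self {n : ℕ} (g : Fin n → Fin 4) : nPauli g * nPauli g = 1 := by
  rw [nPauli_mul_nPauli, ← idN_eq_one]
  simp only [pauliMat_mul_self]
  rfl

lemma nPauli_commute_or_anticommute {n : ℕ} (g g' : Fin n → Fin 4) :
    nPauli g * nPauli g' = nPauli g' * nPauli g ∨
      nPauli g * nPauli g' = -(nPauli g' * nPauli g) := by
  set s : Fin n → ℂ := fun k => if g k = 0 ∨ g' k = 0 ∨ g k = g' k then 1 else -1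
  have hmul : nPauli g * nPauli g' = (∏ k, s k) • (nPauli g' * nPauli g) := by
    ext r c
    simp only [nPauli_mul_nPauli, Matrix.of_apply, Matrix.smul_apply, smul_eq_mul,
      ← Finset.prod_mul_distrib]
    refine Finset.prod_congr rfl fun k _ => ?_
    rw [pauliMat_mul_comm]
    rfl
  have hsq : (∏ k, s k) * ∏ k, s k = 1 := by
    rw [← Finset.prod_mul_distrib]
    exact Finset.prod_eq_one fun k _ => by simp only [s]; split_ifs <;> norm_num
  rcases mul_self_eq_one_iff.mp hsq with h | h <;> simp [hmul, h]

lemma QMat.zsmul_one_injective (n : ℕ) : Function.Injective fun k : ℤ => k • (1 : QMat n) := by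
  intro k m hkm
  have := congrFun (congrFun hkm fun _ => 0) fun _ => 0
  simpa using this

section WordReduction

variable {ι R : Type*} [DecidableEq ι] [Ring R]

def pullSign (ε : ι → ι → ℤ) (a : ι) : List ι → ℤ
  | [] => 1
  | b :: l => if b = a then 1 else ε b a * pullSign ε a l

/-- Fuel `k` rather than well-founded recursion on `l.erase a`, so that `decide` can run it. -/
def reduceWord (ε : ι → ι → ℤ) : ℕ → List ι → ℤ × List ι
  | 0, l => (1, l)
  | _ + 1, [] => (1, [])
  | k + 1, a :: l =>
    if a ∈ l then
      (pullSign ε a l * (reduceWord ε k (l.erase a)).1, (reduceWord ε k (l.erase a)).2)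
    else ((reduceWord ε k l).1, a :: (reduceWord ε k l).2)

variable {ε : ι → ι → ℤ} {f : ι → R} {S : Set ι}

lemma prod_map_eq_pullSign_smul
    (hcomm : ∀ a ∈ S, ∀ b ∈ S, a ≠ b → f a * f b = ε a b • (f b * f a))
    {a : ι} {l : List ι} (hl : ∀ v ∈ l, v ∈ S) (ha : a ∈ l) :
    (l.map f).prod = pullSign ε a l • (f a * ((l.erase a).map f).prod) := by
  induction l with
  | nil => simp at ha
  | cons b l ih =>
    by_cases hba : b = a
    · subst hba
      simp [pullSign]
    · have ha' : a ∈ l := (List.mem_cons.mp ha).resolve_left (Ne.symm hba)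
      have hl' : ∀ v ∈ l, v ∈ S := fun v hv => hl v (List.mem_cons_of_mem b hv)
      rw [List.erase_cons_tail (by simpa using hba), List.map_cons, List.prod_cons,
        List.map_cons, List.prod_cons, ih hl' ha', pullSign, if_neg hba, mul_smul_comm,
        ← mul_assoc, hcomm b (hl b List.mem_cons_self) a (hl a ha) hba, smul_mul_assoc,
        mul_assoc, smul_smul, mul_comm]

lemma prod_map_eq_reduceWord_smul
    (hcomm : ∀ a ∈ S, ∀ b ∈ S, a ≠ b → f a * f b = ε a b • (f b * f a))
    (hsq : ∀ a ∈ S, f a * f a = 1) (k : ℕ) {l : List ι} (hl : ∀ v ∈ l, v ∈ S) :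
    (l.map f).prod = (reduceWord ε k l).1 • ((reduceWord ε k l).2.map f).prod := by
  induction k generalizing l with
  | zero => simp [reduceWord]
  | succ k ih =>
    cases l with
    | nil => simp [reduceWord]
    | cons a l =>
      have ha : a ∈ S := hl a List.mem_cons_self
      have hl' : ∀ v ∈ l, v ∈ S := fun v hv => hl v (List.mem_cons_of_mem a hv)
      by_cases hal : a ∈ l
      · have he : ∀ v ∈ l.erase a, v ∈ S := fun v hv => hl' v (List.mem_of_mem_erase hv)
        rw [reduceWord, if_pos hal, List.map_cons, List.prod_cons,
          prod_map_eq_pullSign_smul hcomm hl' hal, ih he, mul_smul_comm, ← mul_assoc,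
          hsq a ha, one_mul, smul_smul]
      · rw [reduceWord, if_neg hal, List.map_cons, List.prod_cons, ih hl', List.map_cons,
          List.prod_cons, mul_smul_comm]

end WordReduction

lemma prod_mul_eq_neg_one_pow_card_ne {ι : Type*} (s : Finset ι) {x y : ι → ℤ}
    (hx : ∀ i ∈ s, x i = 1 ∨ x i = -1) (hy : ∀ i ∈ s, y i = 1 ∨ y i = -1) :
    ∏ i ∈ s, x i * y i = (-1) ^ #(s.filter fun i => x i ≠ y i) := by
  have hsign : ∀ i ∈ s, x i * y i = if x i ≠ y i then -1 else 1 := fun i hi => by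
    rcases hx i hi with h | h <;> rcases hy i hi with h' | h' <;> simp [h, h']
  rw [prod_congr rfl hsign, prod_ite, prod_const, prod_const_one, mul_one]

lemma quantumSgn_eq_one_or_eq_neg_one {n : ℕ} (α : ℕ → QMat n) (h : Finset ℕ) :
    quantumSgn α h = 1 ∨ quantumSgn α h = -1 := by
  unfold quantumSgn
  split_ifs <;> simp

lemma classicalSgn_eq_one_or_eq_neg_one {a : ℕ → ℤ} (ha : ∀ v, a v = 1 ∨ a v = -1)
    (h : Finset ℕ) : classicalSgn a h = 1 ∨ classicalSgn a h = -1 :=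
  prod_induction _ (fun s => s = 1 ∨ s = -1)
    (by rintro _ _ (rfl | rfl) (rfl | rfl) <;> norm_num) (.inl rfl) fun v _ => ha v

lemma prod_classicalSgn_eq_one {a : ℕ → ℤ} (ha : ∀ v, a v = 1 ∨ a v = -1)
    {T : Finset (Finset ℕ)} (hT : ∀ v ∈ T.biUnion id, Even #(T.filter (v ∈ ·))) :
    ∏ h ∈ T, classicalSgn a h = 1 := by
  unfold classicalSgn
  rw [prod_comm' (t' := T.biUnion id) (s' := fun v => T.filter (v ∈ ·))
    (by intro h v; simp only [mem_biUnion, mem_filter, id]; tauto)]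
  refine prod_eq_one fun v hv => ?_
  rcases ha v with h | h <;> simp [h, (hT v hv).neg_one_pow]

lemma three_le_card_of_odd_card_inter {α ι : Type*} [DecidableEq α] [Nonempty ι]
    {L M : Finset α} {T : ι → Finset α} (hML : M ⊆ L) (hmiss : ∀ x ∈ L, ∃ i, x ∉ T i)
    (hpair : ∀ x ∈ L, ∀ y ∈ L, ∃ i, x ∈ T i ∧ y ∈ T i) (hodd : ∀ i, Odd #(M ∩ T i)) :
    3 ≤ #M := by
  by_contra! hlt
  interval_cases hM : #M
  · obtain ⟨i⟩ := ‹Nonempty ι›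
    simpa [card_eq_zero.mp hM] using hodd i
  · obtain ⟨x, rfl⟩ := card_eq_one.mp hM
    obtain ⟨i, hi⟩ := hmiss x (hML (mem_singleton_self x))
    simpa [hi] using hodd i
  · obtain ⟨x, y, hxy, rfl⟩ := card_eq_two.mp hM
    obtain ⟨i, hx, hy⟩ := hpair x (hML (by simp)) y (hML (by simp))
    have hsub : {x, y} ∩ T i = {x, y} := inter_eq_left.mpr (by simp [insert_subset_iff, hx, hy])
    simpa [hsub, card_pair hxy, Nat.odd_iff] using hodd i

def bitSign (b : ZMod 2) : ℤ := (-1) ^ b.val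

lemma bitSign_add (b c : ZMod 2) : bitSign (b + c) = bitSign b * bitSign c := by
  revert b c
  decide

lemma bitSign_injective : Function.Injective bitSign := by
  decide

lemma bitSign_eq_one_or_eq_neg_one (b : ZMod 2) : bitSign b = 1 ∨ bitSign b = -1 := by
  revert b
  decide

lemma exists_bitSign_eq {s : ℤ} (hs : s = 1 ∨ s = -1) : ∃ b, bitSign b = s := by
  rcases hs with rfl | rfl
  exacts [⟨0, rfl⟩, ⟨1, rfl⟩]

lemma prod_bitSign {ι : Type*} (s : Finset ι) (x : ι → ZMod 2) :
    ∏ i ∈ s, bitSign (x i) = bitSign (∑ i ∈ s, x i) := by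
  induction s using Finset.cons_induction with
  | empty => rfl
  | cons i s hi ih => rw [prod_cons, sum_cons, ih, bitSign_add]

lemma natFinsetProd_toFinset {M : Type*} [Monoid M] {l : List ℕ} (hl : l.Pairwise (· < ·))
    (f : ℕ → M) : natFinsetProd l.toFinset f = (l.map f).prod := by
  rw [natFinsetProd, (List.toFinset_sort _ hl.nodup).mpr (hl.imp le_of_lt)]

def doilyLineList : List (List ℕ) :=
  [[1,2,3], [1,8,9], [1,10,11], [2,4,6], [2,5,7], [3,12,15], [3,13,14],
    [4,8,12], [4,10,14], [5,8,13], [5,10,15], [6,9,15], [6,11,13],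
    [7,9,14], [7,11,12]]

def doilySpread : Fin 6 → List (List ℕ) :=
  ![[[1,2,3], [4,8,12], [5,10,15], [6,11,13], [7,9,14]],
    [[1,2,3], [4,10,14], [5,8,13], [6,9,15], [7,11,12]],
    [[1,8,9], [2,4,6], [3,13,14], [5,10,15], [7,11,12]],
    [[1,8,9], [2,5,7], [3,12,15], [4,10,14], [6,11,13]],
    [[1,10,11], [2,4,6], [3,12,15], [5,8,13], [7,9,14]],
    [[1,10,11], [2,5,7], [3,13,14], [4,8,12], [6,9,15]]]

def offSpread (i : Fin 6) : List (List ℕ) := doilyLineList.filter (· ∉ doilySpread i)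

def offSpreadLines (i : Fin 6) : Finset (Finset ℕ) := ((offSpread i).map List.toFinset).toFinset

def doilyCommSign (v u : ℕ) : ℤ := if ∃ h ∈ doilyLines, v ∈ h ∧ u ∈ h then 1 else -1

def defectLines : Finset (Finset ℕ) := {{3,12,15}, {6,11,13}, {7,9,14}}

lemma offSpread_sorted_mem :
    ∀ i, ∀ l ∈ offSpread i, l.Pairwise (· < ·) ∧ l.toFinset ∈ doilyLines := by
  decide

lemma offSpread_flatten_subset : ∀ i, ∀ v ∈ (offSpread i).flatten, v ∈ V15 := by
  decide

lemma offSpread_nodup : ∀ i, ((offSpread i).map List.toFinset).Nodup := by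
  decide

lemma offSpreadLines_subset : ∀ i, offSpreadLines i ⊆ doilyLines := by
  decide

lemma exists_not_mem_offSpreadLines : ∀ h ∈ doilyLines, ∃ i, h ∉ offSpreadLines i := by
  decide

lemma exists_pair_mem_offSpreadLines :
    ∀ h₁ ∈ doilyLines, ∀ h₂ ∈ doilyLines, ∃ i, h₁ ∈ offSpreadLines i ∧ h₂ ∈ offSpreadLines i := by
  decide

lemma even_card_offSpreadLines_filter_mem :
    ∀ i, ∀ v ∈ (offSpreadLines i).biUnion id, Even #((offSpreadLines i).filter (v ∈ ·)) := by
  decide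

lemma reduceWord_offSpread :
    ∀ i, reduceWord doilyCommSign 30 (offSpread i).flatten = (-1, []) := by
  decide

lemma defectLines_subset : defectLines ⊆ doilyLines := by
  decide

lemma card_defectLines : #defectLines = 3 := by
  decide

lemma card_offSpreadLines_filter_mem_defectLines :
    ∀ i, (#((offSpreadLines i).filter (· ∈ defectLines)) : ZMod 2) = 1 := by
  decide

lemma sum_offSpreadLines {M : Type*} [AddCommMonoid M] (t : Finset ℕ → M) (i : Fin 6) :
    ∑ h ∈ offSpreadLines i, t h = ((offSpread i).map fun l => t l.toFinset).sum := by
  rw [offSpreadLines, List.sum_toFinset _ (offSpread_nodup i), List.map_map]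
  rfl

lemma exists_sum_eq_of_sum_offSpreadLines_eq_zero (t : Finset ℕ → ZMod 2)
    (ht : ∀ i, ∑ h ∈ offSpreadLines i, t h = 0) :
    ∃ x : ℕ → ZMod 2, ∀ h ∈ doilyLines, ∑ v ∈ h, x v = t h := by
  simp only [sum_offSpreadLines] at ht
  simp +decide only [Fin.forall_fin_succ, offSpread, doilySpread, doilyLineList, List.filter,
    decide_true, decide_false, List.map, List.toFinset_cons, List.toFinset_nil, insert_empty_eq,
    List.sum_cons, List.sum_nil, add_zero, cons_val_succ, cons_val_fin_one,
    forall_const] at ht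
  -- Solve along ten lines, with `x = 0` at 10, 11, 13, 14, 15; the relations give the other five.
  let x1 := t {1,10,11}
  let x3 := t {3,13,14}
  let x4 := t {4,10,14}
  let x12 := t {3,12,15} + x3
  let x2 := t {1,2,3} + x1 + x3
  let x8 := t {4,8,12} + x4 + x12
  let x9 := t {1,8,9} + x1 + x8
  let x6 := t {2,4,6} + x2 + x4
  let x5 := t {5,8,13} + x8
  let x7 := t {2,5,7} + x2 + x5
  refine ⟨fun v => match v with
    | 1 => x1 | 2 => x2 | 3 => x3 | 4 => x4 | 5 => x5 | 6 => x6 | 7 => x7 | 8 => x8 | 9 => x9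
    | 12 => x12 | _ => 0, ?_⟩
  simp only [doilyLines, mem_insert, mem_singleton]
  rintro h (rfl|rfl|rfl|rfl|rfl|rfl|rfl|rfl|rfl|rfl|rfl|rfl|rfl|rfl|rfl) <;>
    grind [sum_insert, sum_singleton]

lemma mem_doilyG_pair_iff {v u : ℕ} (hv : v ∈ V15) (hu : u ∈ V15) (hvu : v ≠ u) :
    {v, u} ∈ doilyG ↔ ¬∃ h ∈ doilyLines, v ∈ h ∧ u ∈ h := by
  simp [doilyG, mem_powersetCard, insert_subset_iff, hv, hu, card_pair hvu]

namespace IsPauliAssignment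

variable {n : ℕ} {α : ℕ → QMat n}

lemma mul_self (hα : IsPauliAssignment V15 doilyLines doilyG n α) {v : ℕ} (hv : v ∈ V15) :
    α v * α v = 1 := by
  obtain ⟨g, hg⟩ := hα.1 v hv
  rw [hg, nPauli_mul_self]

lemma mul_comm_doilyCommSign (hα : IsPauliAssignment V15 doilyLines doilyG n α) {v u : ℕ}
    (hv : v ∈ V15) (hu : u ∈ V15) (hvu : v ≠ u) :
    α v * α u = doilyCommSign v u • (α u * α v) := by
  have hanti := hα.2.2.2.1 v hv u hu hvu
  rw [mem_doilyG_pair_iff hv hu hvu] at hanti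
  unfold doilyCommSign
  split_ifs with hcol
  · obtain ⟨g, hg⟩ := hα.1 v hv
    obtain ⟨g', hg'⟩ := hα.1 u hu
    rw [hg, hg'] at hanti ⊢
    rw [one_smul]
    exact (nPauli_commute_or_anticommute g g').resolve_right fun h => hanti.mp h hcol
  · rw [neg_one_smul]
    exact hanti.mpr hcol

lemma natFinsetProd_eq (hα : IsPauliAssignment V15 doilyLines doilyG n α) {h : Finset ℕ}
    (hh : h ∈ doilyLines) : natFinsetProd h α = quantumSgn α h • (1 : QMat n) := by
  unfold quantumSgn
  rw [← idN_eq_one]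
  split_ifs with h1
  · rw [h1, one_smul]
  · rw [(hα.2.2.2.2 h hh).resolve_left h1, neg_one_smul]

lemma prod_flatten (hα : IsPauliAssignment V15 doilyLines doilyG n α) {L : List (List ℕ)}
    (hL : ∀ l ∈ L, l.Pairwise (· < ·) ∧ l.toFinset ∈ doilyLines) :
    (L.flatten.map α).prod = (L.map fun l => quantumSgn α l.toFinset).prod • (1 : QMat n) := by
  induction L with
  | nil => simp
  | cons l L ih =>
    obtain ⟨hsort, hmem⟩ := hL l List.mem_cons_self
    rw [List.flatten_cons, List.map_append, List.prod_append, ← natFinsetProd_toFinset hsort,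
      hα.natFinsetProd_eq hmem, ih fun l' hl' => hL l' (List.mem_cons_of_mem l hl'),
      List.map_cons, List.prod_cons, smul_mul_smul_comm, one_mul]

lemma prod_offSpreadLines (hα : IsPauliAssignment V15 doilyLines doilyG n α) (i : Fin 6) :
    ∏ h ∈ offSpreadLines i, quantumSgn α h = -1 := by
  have hword := prod_map_eq_reduceWord_smul (S := (V15 : Set ℕ))
    (fun v hv u hu hvu => hα.mul_comm_doilyCommSign hv hu hvu) (fun v hv => hα.mul_self hv) 30
    (l := (offSpread i).flatten) fun v hv => mem_coe.mpr (offSpread_flatten_subset i v hv)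
  rw [reduceWord_offSpread, hα.prod_flatten (offSpread_sorted_mem i)] at hword
  rw [offSpreadLines, List.prod_toFinset _ (offSpread_nodup i), List.map_map]
  exact QMat.zsmul_one_injective n hword

lemma three_le_card_filter_ne (hα : IsPauliAssignment V15 doilyLines doilyG n α) {a : ℕ → ℤ}
    (ha : ∀ v, a v = 1 ∨ a v = -1) :
    3 ≤ #(doilyLines.filter fun h => quantumSgn α h ≠ classicalSgn a h) := by
  refine three_le_card_of_odd_card_inter (filter_subset _ _) exists_not_mem_offSpreadLines
    exists_pair_mem_offSpreadLines fun i => ?_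
  have hclassical := prod_classicalSgn_eq_one ha (even_card_offSpreadLines_filter_mem i)
  have hparity := prod_mul_eq_neg_one_pow_card_ne (offSpreadLines i)
    (fun h _ => quantumSgn_eq_one_or_eq_neg_one α h)
    (fun h _ => classicalSgn_eq_one_or_eq_neg_one ha h)
  rw [prod_mul_distrib, hα.prod_offSpreadLines i, hclassical, mul_one] at hparity
  rw [filter_inter, inter_eq_right.mpr (offSpreadLines_subset i)]
  exact (neg_one_pow_eq_neg_one_iff_odd (by norm_num)).mp hparity.symm

lemma exists_card_filter_ne_eq_three (hα : IsPauliAssignment V15 doilyLines doilyG n α) :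
    ∃ a : ℕ → ℤ, (∀ v, a v = 1 ∨ a v = -1) ∧
      #(doilyLines.filter fun h => quantumSgn α h ≠ classicalSgn a h) = 3 := by
  choose e he using fun h => exists_bitSign_eq (quantumSgn_eq_one_or_eq_neg_one α h)
  set t : Finset ℕ → ZMod 2 := fun h => e h + if h ∈ defectLines then 1 else 0
  have ht : ∀ i, ∑ h ∈ offSpreadLines i, t h = 0 := by
    intro i
    have he_sum : ∑ h ∈ offSpreadLines i, e h = 1 :=
      bitSign_injective (by simp only [← prod_bitSign, he, hα.prod_offSpreadLines i]; rfl)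
    simp only [t, sum_add_distrib, he_sum, sum_boole, card_offSpreadLines_filter_mem_defectLines i]
    decide
  obtain ⟨x, hx⟩ := exists_sum_eq_of_sum_offSpreadLines_eq_zero t ht
  refine ⟨fun v => bitSign (x v), fun v => bitSign_eq_one_or_eq_neg_one _, ?_⟩
  have hne : ∀ h ∈ doilyLines,
      quantumSgn α h ≠ classicalSgn (fun v => bitSign (x v)) h ↔ h ∈ defectLines := by
    intro h hh
    rw [classicalSgn, prod_bitSign, hx h hh, ← he h, bitSign_injective.ne_iff]
    by_cases hd : h ∈ defectLines <;> simp [t, hd]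
  rw [← card_defectLines]
  congr 1
  ext h
  rw [mem_filter]
  exact ⟨fun ⟨hh, hq⟩ => (hne h hh).mp hq,
    fun hd => ⟨defectLines_subset hd, (hne h (defectLines_subset hd)).mpr hd⟩⟩

end IsPauliAssignment

/-- Every Pauli assignment of the doily hypergram
`S_d = ({1,…,15}, H_d, G_d)` has contextuality degree 3. -/
theorem doily_contextuality_degree_three
    (n : ℕ) (α : ℕ → QMat n)
    (h : IsPauliAssignment V15 doilyLines doilyG n α) :
    contextualityDegree doilyLines α = 3 := by
  obtain ⟨a, ha, hcard⟩ := h.exists_card_filter_ne_eq_three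
  exact IsLeast.csInf_eq ⟨⟨a, ha, hcard.symm⟩, by
    rintro d ⟨a, ha, rfl⟩
    exact h.three_le_card_filter_ne ha⟩

end
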